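/- arXiv:2210.14638 — 2 statements merged into one kernel-verified Lean document; each statement's English description precedes it below -/
import Mathlib

section
/- Let k and s be positive integers, q : [k] → ℕ non-decreasing, G a graph, D ⊆ V(G), and (T,χ) a connectivity-sensitive star decomposition of G with central bag b such that χ(b) is q-unbreakability-tied to D and every leaf ℓ of T satisfies |χ(ℓ)| ≤ s. Then V(G) is q'-unbreakability-tied to D, where q'(i) = (2^{q(i)} + i)·s for all i ∈ [k]. -/
open Finset

variable {V : Type*} [Fintype V] [DecidableEq V]

/-- A separation of a graph: a pair of vertex sets covering all vertices with no edge
between the two strict sides. Its order is `(A ∩ B).card`. -/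
def IsSep (G : SimpleGraph V) (A B : Finset V) : Prop :=
  A ∪ B = Finset.univ ∧
    ∀ a ∈ A, a ∉ B → ∀ b ∈ B, b ∉ A → ¬ G.Adj a b

/-- The `k`-improved graph `G^⟨k⟩`: `x` and `y` are adjacent iff they are distinct and no
separation of `G` of order at most `k` separates them (i.e. `μ_G(x,y) > k`). -/
def ImprovedGraph (G : SimpleGraph V) (k : ℕ) : SimpleGraph V where
  Adj x y := x ≠ y ∧ ∀ A B : Finset V, IsSep G A B → (A ∩ B).card ≤ k →
    ¬ ((x ∈ A ∧ x ∉ B ∧ y ∈ B ∧ y ∉ A) ∨ (y ∈ A ∧ y ∉ B ∧ x ∈ B ∧ x ∉ A))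
  symm := ⟨by
    rintro x y ⟨hxy, h⟩
    exact ⟨hxy.symm, fun A B hs ho hc => h A B hs ho hc.symm⟩⟩
  loopless := ⟨fun x h => h.1 rfl⟩

/-- `S` is `(q,k)`-unbreakable in `G`: every separation of order at most `k` has at most `q`
vertices of `S` on one of its sides. -/
def UnbreakableSet (G : SimpleGraph V) (S : Finset V) (q k : ℕ) : Prop :=
  ∀ A B : Finset V, IsSep G A B → (A ∩ B).card ≤ k →
    (A ∩ S).card ≤ q ∨ (B ∩ S).card ≤ q

/-- A clique separation: both strict sides nonempty and the separator is a clique. -/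
def IsCliqueSep (G : SimpleGraph V) (A B : Finset V) : Prop :=
  IsSep G A B ∧ (A \ B).Nonempty ∧ (B \ A).Nonempty ∧ G.IsClique (↑(A ∩ B) : Set V)

/-- `y` is reachable from `x` in `G − W`. -/
def AvoidReach (G : SimpleGraph V) (W : Finset V) (x y : V) : Prop :=
  ∃ p : G.Walk x y, ∀ v ∈ p.support, v ∉ W

/-- `W` is an `X`-`Y` separator: no vertex of `Y \ W` is reachable from `X \ W` in `G − W`. -/
def IsSepSet (G : SimpleGraph V) (W X Y : Finset V) : Prop :=
  ∀ x ∈ X, ∀ y ∈ Y, ¬ AvoidReach G W x y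

/-- `R_{G−W}(X \ W)`: the set of vertices reachable from `X \ W` in `G − W`. -/
def ReachSet (G : SimpleGraph V) (W X : Finset V) : Set V :=
  {y | ∃ x ∈ X, AvoidReach G W x y}

/-- An important `X`-`Y` separator. -/
def IsImpSep (G : SimpleGraph V) (X Y W : Finset V) : Prop :=
  IsSepSet G W X Y ∧
  (∀ W' ⊆ W, W' ≠ W → ¬ IsSepSet G W' X Y) ∧
  ∀ W' : Finset V, IsSepSet G W' X Y → W'.card ≤ W.card →
    ¬ (ReachSet G W X ⊂ ReachSet G W' X)

/-- A `k`-important `X`-`Y` separator. -/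
def IsKImpSep (G : SimpleGraph V) (k : ℕ) (X Y W : Finset V) : Prop :=
  IsImpSep G X Y W ∧ W.card ≤ k ∧
  ∀ W' : Finset V, IsImpSep G X Y W' → W'.card ≤ k → W' ≠ W →
    ¬ (ReachSet G W X ⊆ ReachSet G W' X)

/-- The `k`-important separator extension of `D`. -/
def KImpExt (G : SimpleGraph V) (D : Finset V) (k : ℕ) : Set V :=
  {u | (∃ v, v ≠ u ∧ ∃ S : Finset V, IsKImpSep G k {v} D S ∧ u ∈ S) ∨
       (({u} : Finset V).card ≤ k ∧ IsSepSet G {u} {u} D ∧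
        ∀ S : Finset V, IsSepSet G S {u} D → S.card ≤ k → S = {u})}

/-- `C` is (the vertex set of) a connected component of `G − A`. -/
def IsCompAvoiding (G : SimpleGraph V) (A : Set V) (C : Set V) : Prop :=
  ∃ x, x ∉ A ∧ C = {y | ∃ p : G.Walk x y, ∀ v ∈ p.support, v ∉ A}

/-- `C` is (the vertex set of) a connected component of the induced subgraph `G[S]`. -/
def IsCompWithin (G : SimpleGraph V) (S : Set V) (C : Set V) : Prop :=
  ∃ x ∈ S, C = {y | ∃ p : G.Walk x y, ∀ v ∈ p.support, v ∈ S}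

/-- The (open) neighborhood of a vertex set `C` in `G`. -/
def nbhdSet (G : SimpleGraph V) (C : Set V) : Set V :=
  {v | v ∉ C ∧ ∃ c ∈ C, G.Adj v c}

/-- A connectivity-sensitive star decomposition of `G`, given by its central bag and its
set of leaf bags. -/
structure ConnSensStar (G : SimpleGraph V) where
  center : Finset V
  leaves : Finset (Finset V)
  cover : ∀ v : V, v ∈ center ∨ ∃ L ∈ leaves, v ∈ L
  edges : ∀ x y : V, G.Adj x y →
    (x ∈ center ∧ y ∈ center) ∨ ∃ L ∈ leaves, x ∈ L ∧ y ∈ L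
  inter : ∀ L ∈ leaves, ∀ L' ∈ leaves, L ≠ L' → ∀ v ∈ L, v ∈ L' → v ∈ center
  adh_distinct : ∀ L ∈ leaves, ∀ L' ∈ leaves, L ∩ center = L' ∩ center → L = L'
  comp_nbhd : ∀ L ∈ leaves, ∀ C : Set V,
    IsCompWithin G ((↑L : Set V) \ (↑center : Set V)) C → nbhdSet G C = ↑(L ∩ center)

/-- `(A,B)` is an `S`-stable separation of `G`. -/
def IsStableSep (G : SimpleGraph V) (S : Finset V) (A B : Finset V) : Prop :=
  IsSep G A B ∧ ∃ SL SR : Finset V, SL ∪ SR = S ∧ SL ∩ SR = ∅ ∧ SL ⊆ A ∧ SR ⊆ B ∧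
    ∀ A' B' : Finset V, IsSep G A' B' → SL ⊆ A' → SR ⊆ B' → (A ∩ B).card ≤ (A' ∩ B').card

/-- A `Λ`-boundaried graph: a graph together with an injective partial assignment of
labels to (boundary) vertices. -/
structure BGraph (Λ : Type*) (V : Type*) where
  G : SimpleGraph V
  bd : Λ → Option V
  inj : ∀ l l' v, bd l = some v → bd l' = some v → l = l'

/-- `K` (with embeddings `f₁`, `f₂`) is the gluing `H₁ ⊕ H₂` of two boundaried graphs:
vertices of equal label are identified, and an edge is present iff it is present in
(at least) one of the two graphs. -/
def IsGluing {Λ V₁ V₂ W : Type*} (H₁ : BGraph Λ V₁) (H₂ : BGraph Λ V₂)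
    (K : SimpleGraph W) (f₁ : V₁ → W) (f₂ : V₂ → W) : Prop :=
  Function.Injective f₁ ∧ Function.Injective f₂ ∧
  (∀ w : W, (∃ a, f₁ a = w) ∨ (∃ b, f₂ b = w)) ∧
  (∀ a b, f₁ a = f₂ b ↔ ∃ l, H₁.bd l = some a ∧ H₂.bd l = some b) ∧
  (∀ x y : W, K.Adj x y ↔
    (∃ a b, f₁ a = x ∧ f₁ b = y ∧ H₁.G.Adj a b) ∨
    (∃ a b, f₂ a = x ∧ f₂ b = y ∧ H₂.G.Adj a b))

/-- The weak cut signature value of the boundaried graph `H` at `(A', B')` is at most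
`n − |A' ∩ B'|`: there is a separation of order at most `n` whose sides contain the
boundary vertices labeled by `A'` and `B'`, respectively. -/
def WeakSigLE {Λ : Type*} {V : Type*} [Fintype V] [DecidableEq V]
    (H : BGraph Λ V) (A' B' : Finset Λ) (n : ℕ) : Prop :=
  ∃ A B : Finset V, IsSep H.G A B ∧
    (∀ l ∈ A', ∀ v, H.bd l = some v → v ∈ A) ∧
    (∀ l ∈ B', ∀ v, H.bd l = some v → v ∈ B) ∧ (A ∩ B).card ≤ n

/-- Two `Λ`-boundaried graphs have the same weak cut signature. -/
def SameWeakSig {Λ : Type*} [Fintype Λ] [DecidableEq Λ] {V₁ V₂ : Type*}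
    [Fintype V₁] [DecidableEq V₁] [Fintype V₂] [DecidableEq V₂]
    (H₁ : BGraph Λ V₁) (H₂ : BGraph Λ V₂) : Prop :=
  ∀ A' B' : Finset Λ, A' ∪ B' = Finset.univ →
    ∀ n : ℕ, WeakSigLE H₁ A' B' n ↔ WeakSigLE H₂ A' B' n

/-! Split the `L`-side of a separation `(L, R)` into three parts. Central vertices of `L` number
at most `q(i)`. A non-central vertex whose component inside its leaf meets `L ∩ R` lies in the
leaf of a separator vertex, giving at most `i·s` vertices. Otherwise its component lies in
`L \ R`, so by connectivity-sensitivity the adhesion of its leaf lies in `L ∩ χ(b)`; distinct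
leaves have distinct adhesions, so there are at most `2^{q(i)}` such leaves, and since all but
one of them have nonempty adhesion, their private vertices together with `L ∩ χ(b)` number at
most `2^{q(i)}·s`. -/

namespace IsSep

variable {G : SimpleGraph V} {L R : Finset V}

lemma mem_or_mem (h : IsSep G L R) (u : V) : u ∈ L ∨ u ∈ R :=
  mem_union.mp (h.1 ▸ mem_univ u)

lemma mem_left_of_adj (h : IsSep G L R) {a b : V} (ha : a ∈ L) (haR : a ∉ R)
    (hab : G.Adj a b) : b ∈ L := by
  by_contra hb
  exact h.2 a ha haR b ((h.mem_or_mem b).resolve_left hb) hb hab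

lemma support_subset_left (h : IsSep G L R) {x y : V} (p : G.Walk x y) (hx : x ∈ L)
    (hp : ∀ u ∈ p.support, u ∉ L ∩ R) : ∀ u ∈ p.support, u ∈ L := by
  induction p with
  | nil =>
    intro u hu
    rw [SimpleGraph.Walk.support_nil, List.mem_singleton] at hu
    rwa [hu]
  | @cons a b c hab p ih =>
    have haR : a ∉ R := fun haR => hp a (p.cons hab).start_mem_support (mem_inter.mpr ⟨hx, haR⟩)
    intro u hu
    rw [SimpleGraph.Walk.support_cons] at hp hu
    rcases List.mem_cons.mp hu with rfl | hu
    · exact hx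
    · exact ih (h.mem_left_of_adj hx haR hab) (fun w hw => hp w (List.mem_cons_of_mem _ hw)) u hu

lemma nbhdSet_subset_left (h : IsSep G L R) {C : Set V} (hC : C ⊆ ↑L \ ↑R) :
    nbhdSet G C ⊆ ↑L := by
  rintro u ⟨-, c, hc, hcu⟩
  exact h.mem_left_of_adj (hC hc).1 (hC hc).2 hcu.symm

end IsSep

/-- The vertex set of the component of `G[S]` containing `v` (empty if `v ∉ S`). -/
def compWithin (G : SimpleGraph V) (S : Set V) (v : V) : Set V :=
  {y | ∃ p : G.Walk v y, ∀ u ∈ p.support, u ∈ S}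

section compWithin

variable {G : SimpleGraph V} {S : Set V} {v : V}

omit [Fintype V] [DecidableEq V] in
lemma isCompWithin_compWithin (hv : v ∈ S) : IsCompWithin G S (compWithin G S v) :=
  ⟨v, hv, rfl⟩

omit [Fintype V] [DecidableEq V] in
lemma compWithin_subset : compWithin G S v ⊆ S :=
  fun _ ⟨p, hp⟩ => hp _ p.end_mem_support

omit [Fintype V] in
lemma mem_compWithin_of_mem_support {y : V} (p : G.Walk v y) (hp : ∀ u ∈ p.support, u ∈ S)
    {u : V} (hu : u ∈ p.support) : u ∈ compWithin G S v :=
  ⟨p.takeUntil u hu, fun w hw => hp w (p.support_takeUntil_subset_support hu hw)⟩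

lemma IsSep.compWithin_subset_sdiff {L R : Finset V} (h : IsSep G L R) (hv : v ∈ L)
    (hC : ∀ w ∈ compWithin G S v, w ∉ L ∩ R) : compWithin G S v ⊆ ↑L \ ↑R := by
  rintro c ⟨p, hp⟩
  have hpLR : ∀ u ∈ p.support, u ∉ L ∩ R :=
    fun u hu => hC u (mem_compWithin_of_mem_support p hp hu)
  have hcL := h.support_subset_left p hv hpLR c p.end_mem_support
  exact ⟨hcL, fun hcR => hpLR c p.end_mem_support (mem_inter.mpr ⟨hcL, hcR⟩)⟩

end compWithin

namespace ConnSensStar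

variable {G : SimpleGraph V} (T : ConnSensStar G)

open Classical in
/-- The leaf bag containing `v`, unique when `v` is not central; `∅` if there is none. -/
noncomputable def leafOf (v : V) : Finset V :=
  if h : ∃ ℓ ∈ T.leaves, v ∈ ℓ then h.choose else ∅

def leavesOver (X : Finset V) : Finset (Finset V) :=
  T.leaves.filter (fun ℓ => ℓ ∩ T.center ⊆ X)

variable {T}

omit [Fintype V] in
lemma leafOf_mem_leaves_and_mem {v : V} (hv : v ∉ T.center) :
    T.leafOf v ∈ T.leaves ∧ v ∈ T.leafOf v := by
  have h : ∃ ℓ ∈ T.leaves, v ∈ ℓ := (T.cover v).resolve_left hv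
  rw [leafOf, dif_pos h]
  exact h.choose_spec

omit [Fintype V] in
lemma eq_leafOf {ℓ : Finset V} {v : V} (hℓ : ℓ ∈ T.leaves) (hv : v ∈ ℓ) (hvc : v ∉ T.center) :
    ℓ = T.leafOf v := by
  by_contra hne
  obtain ⟨hleaf, hvleaf⟩ := leafOf_mem_leaves_and_mem hvc
  exact hvc (T.inter ℓ hℓ _ hleaf hne v hv hvleaf)

omit [Fintype V] in
lemma card_leafOf_le {s : ℕ} (hleaf : ∀ L ∈ T.leaves, L.card ≤ s) (v : V) :
    (T.leafOf v).card ≤ s := by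
  unfold leafOf
  split_ifs with h
  · exact hleaf _ h.choose_spec.1
  · simp

lemma adhesion_subset_of_isSep {L R ℓ : Finset V} {v : V} (hsep : IsSep G L R)
    (hℓ : ℓ ∈ T.leaves) (hv : v ∈ ℓ) (hvc : v ∉ T.center) (hvL : v ∈ L)
    (hC : ∀ w ∈ compWithin G (↑ℓ \ ↑T.center) v, w ∉ L ∩ R) :
    ℓ ∩ T.center ⊆ L := by
  intro u hu
  have hnbhd := T.comp_nbhd ℓ hℓ _ (isCompWithin_compWithin (show v ∈ (↑ℓ \ ↑T.center : Set V)
    from ⟨hv, hvc⟩))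
  exact hsep.nbhdSet_subset_left (hsep.compWithin_subset_sdiff hvL hC) (hnbhd ▸ hu : u ∈ _)

lemma subset_of_isSep {L R : Finset V} (hsep : IsSep G L R) :
    L ⊆ (L ∩ T.center ∪ (T.leavesOver (L ∩ T.center)).biUnion (· \ T.center)) ∪
      (L ∩ R).biUnion T.leafOf := by
  intro v hvL
  by_cases hvc : v ∈ T.center
  · exact mem_union_left _ (mem_union_left _ (mem_inter.mpr ⟨hvL, hvc⟩))
  obtain ⟨hℓ, hvℓ⟩ := leafOf_mem_leaves_and_mem hvc
  by_cases hmeet : ∃ w ∈ compWithin G (↑(T.leafOf v) \ ↑T.center) v, w ∈ L ∩ R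
  · obtain ⟨w, hwC, hwLR⟩ := hmeet
    obtain ⟨hwℓ, hwc⟩ := compWithin_subset hwC
    refine mem_union_right _ (mem_biUnion.mpr ⟨w, hwLR, ?_⟩)
    rwa [← eq_leafOf hℓ hwℓ hwc]
  · simp only [not_exists, not_and] at hmeet
    have hadh : T.leafOf v ∩ T.center ⊆ L ∩ T.center := fun u hu =>
      mem_inter.mpr ⟨adhesion_subset_of_isSep hsep hℓ hvℓ hvc hvL hmeet hu, (mem_inter.mp hu).2⟩
    refine mem_union_left _ (mem_union_right _ (mem_biUnion.mpr ⟨T.leafOf v, ?_, ?_⟩))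
    · exact mem_filter.mpr ⟨hℓ, hadh⟩
    · exact mem_sdiff.mpr ⟨hvℓ, hvc⟩

omit [Fintype V] in
lemma card_leavesOver_le (X : Finset V) : (T.leavesOver X).card ≤ 2 ^ X.card := by
  rw [← card_powerset]
  refine card_le_card_of_injOn (· ∩ T.center) (fun ℓ hℓ => ?_) (fun ℓ hℓ ℓ' hℓ' h => ?_)
  · exact mem_powerset.mpr (mem_filter.mp hℓ).2
  · exact T.adh_distinct ℓ (mem_filter.mp hℓ).1 ℓ' (mem_filter.mp hℓ').1 h

omit [Fintype V] in
lemma card_le_sum_card_adhesion_add_one {F : Finset (Finset V)} (hF : F ⊆ T.leaves) :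
    F.card ≤ ∑ ℓ ∈ F, (ℓ ∩ T.center).card + 1 := by
  have hempty : (F.filter (fun ℓ => ℓ ∩ T.center = ∅)).card ≤ 1 := by
    refine card_le_one.mpr fun a ha b hb => ?_
    rw [mem_filter] at ha hb
    exact T.adh_distinct a (hF ha.1) b (hF hb.1) (ha.2.trans hb.2.symm)
  have hnonempty : (F.filter (fun ℓ => ¬ℓ ∩ T.center = ∅)).card ≤
      ∑ ℓ ∈ F, (ℓ ∩ T.center).card :=
    calc (F.filter (fun ℓ => ¬ℓ ∩ T.center = ∅)).card
        = ∑ ℓ ∈ F.filter (fun ℓ => ¬ℓ ∩ T.center = ∅), 1 := card_eq_sum_ones _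
      _ ≤ ∑ ℓ ∈ F.filter (fun ℓ => ¬ℓ ∩ T.center = ∅), (ℓ ∩ T.center).card :=
        sum_le_sum fun ℓ hℓ => card_pos.mpr (nonempty_iff_ne_empty.mpr (mem_filter.mp hℓ).2)
      _ ≤ ∑ ℓ ∈ F, (ℓ ∩ T.center).card := sum_le_sum_of_subset (filter_subset _ _)
  have := card_filter_add_card_filter_not (s := F) (p := fun ℓ => ℓ ∩ T.center = ∅)
  omega

omit [Fintype V] in
lemma card_add_sum_card_leavesOver_le {s : ℕ} (hs : 0 < s)
    (hleaf : ∀ L ∈ T.leaves, L.card ≤ s) (X : Finset V) :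
    X.card + ∑ ℓ ∈ T.leavesOver X, (ℓ \ T.center).card ≤ 2 ^ X.card * s := by
  set F := T.leavesOver X
  have hF : F ⊆ T.leaves := filter_subset _ _
  have hsplit : ∑ ℓ ∈ F, (ℓ \ T.center).card + ∑ ℓ ∈ F, (ℓ ∩ T.center).card ≤ F.card * s :=
    calc _ = ∑ ℓ ∈ F, ℓ.card := by
          rw [← sum_add_distrib]
          exact sum_congr rfl fun ℓ _ => card_sdiff_add_card_inter ℓ T.center
      _ ≤ F.card * s := by
          simpa only [smul_eq_mul] using sum_le_card_nsmul F _ s fun ℓ hℓ => hleaf ℓ (hF hℓ)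
  have hadh := card_le_sum_card_adhesion_add_one hF
  have hFP : F.card ≤ 2 ^ X.card := card_leavesOver_le X
  have hXP : X.card < 2 ^ X.card := Nat.lt_two_pow_self
  have hgap : 2 ^ X.card - F.card ≤ (2 ^ X.card - F.card) * s := Nat.le_mul_of_pos_right _ hs
  have hmul : (2 ^ X.card - F.card) * s + F.card * s = 2 ^ X.card * s := by
    rw [← add_mul, Nat.sub_add_cancel hFP]
  omega

end ConnSensStar

theorem star_decomp_tied_general (G : SimpleGraph V) (k s : ℕ) (hs : 0 < s)
    (q : ℕ → ℕ) (D : Finset V) (T : ConnSensStar G)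
    (hcenter : ∀ L R : Finset V, IsSep G L R → (L ∩ R).card ≤ k → D ⊆ R →
      (L ∩ T.center).card ≤ q (L ∩ R).card)
    (hleaf : ∀ L ∈ T.leaves, L.card ≤ s) :
    ∀ L R : Finset V, IsSep G L R → (L ∩ R).card ≤ k → D ⊆ R →
      L.card ≤ (2 ^ q (L ∩ R).card + (L ∩ R).card) * s := by
  intro L R hsep hord hD
  set Q := L ∩ T.center
  have hQ : Q.card ≤ q (L ∩ R).card := hcenter L R hsep hord hD
  calc L.card
      ≤ (Q ∪ (T.leavesOver Q).biUnion (· \ T.center)).card + ((L ∩ R).biUnion T.leafOf).card :=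
        (card_le_card (T.subset_of_isSep hsep)).trans (card_union_le _ _)
    _ ≤ (Q.card + ∑ ℓ ∈ T.leavesOver Q, (ℓ \ T.center).card) + (L ∩ R).card * s :=
        add_le_add ((card_union_le _ _).trans (Nat.add_le_add_left card_biUnion_le _))
          (card_biUnion_le_card_mul _ _ _ fun v _ => ConnSensStar.card_leafOf_le hleaf v)
    _ ≤ 2 ^ Q.card * s + (L ∩ R).card * s :=
        Nat.add_le_add_right (T.card_add_sum_card_leavesOver_le hs hleaf Q) _
    _ ≤ 2 ^ q (L ∩ R).card * s + (L ∩ R).card * s := by gcongr; norm_num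
    _ = (2 ^ q (L ∩ R).card + (L ∩ R).card) * s := (add_mul _ _ _).symm

/-- if `G` has a connectivity-sensitive star decomposition whose central
bag is `q`-unbreakability-tied to `D` and whose leaf bags all have size at most `s`,
then `V(G)` is `q'`-unbreakability-tied to `D` with `q'(i) = (2^{q(i)} + i)·s`. -/
theorem star_decomp_tied (G : SimpleGraph V) (k s : ℕ) (hk : 0 < k) (hs : 0 < s)
    (q : ℕ → ℕ) (hq : Monotone q) (D : Finset V) (T : ConnSensStar G)
    (hcenter : ∀ L R : Finset V, IsSep G L R → (L ∩ R).card ≤ k → D ⊆ R →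
      (L ∩ T.center).card ≤ q (L ∩ R).card)
    (hleaf : ∀ L ∈ T.leaves, L.card ≤ s) :
    ∀ L R : Finset V, IsSep G L R → (L ∩ R).card ≤ k → D ⊆ R →
      L.card ≤ (2 ^ q (L ∩ R).card + (L ∩ R).card) * s :=
  star_decomp_tied_general G k s hs q D T hcenter hleaf
end

section
/- Let Λ be a finite label set and (G,ι), (G₁,ι₁), (G₂,ι₂) be Λ-boundaried graphs such that (G₁,ι₁) and (G₂,ι₂) have the same weak cut signature. Then for every vertex set S ⊆ V(G) and nonnegative integers q, r: S is (q,r)-unbreakable in (G,ι) ⊕ (G₁,ι₁) if and only if S is (q,r)-unbreakable in (G,ι) ⊕ (G₂,ι₂). -/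
open Finset

variable {V : Type*} [Fintype V] [DecidableEq V]

/-!
Take a separation `(A₂, B₂)` of `G ⊕ G₂` of order at most `r` and restrict it to `G` and to
`G₂`. The restriction to `G₂` bounds the weak cut signature of `G₂` at the pair of label sets
lying on either side, so equal signatures give a separation of `G₁` that respects the same
labels and has no larger separator. Glued to the restriction on `G`, it is a separation of
`G ⊕ G₁` with the same trace on `V(G)`, hence on `S`. Its order is at most that of `(A₂, B₂)`:
the separators differ only in their `G₁`/`G₂` parts, and the vertices of `G` identified with a
separator vertex of `G₂` are also identified with one of `G₁`, since equal signatures force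
equal label sets.
-/

section Separations

variable {U W : Type*} [Fintype U] [DecidableEq U] [Fintype W] [DecidableEq W]

theorem IsSep.mem_or_mem_s17 {G : SimpleGraph W} {A B : Finset W} (h : IsSep G A B) (w : W) :
    w ∈ A ∨ w ∈ B :=
  mem_union.mp (h.1 ▸ mem_univ w)

theorem IsSep.comap {G : SimpleGraph U} {K : SimpleGraph W} {A B : Finset W}
    (h : IsSep K A B) (φ : G →g K) :
    IsSep G (univ.filter (φ · ∈ A)) (univ.filter (φ · ∈ B)) := by
  refine ⟨eq_univ_of_forall fun u => ?_, fun a ha ha' b hb hb' hab => ?_⟩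
  · simpa only [mem_union, mem_filter, mem_univ, true_and] using h.mem_or_mem_s17 (φ u)
  · simp only [mem_filter, mem_univ, true_and] at ha ha' hb hb'
    exact h.2 _ ha ha' _ hb hb' (φ.map_adj hab)

end Separations

theorem Finset.card_image_inter {U W : Type*} [DecidableEq W] {f : U → W}
    (hf : Function.Injective f) (S : Finset U) (T : Finset W) :
    (S.image f ∩ T).card = (S.filter (f · ∈ T)).card := by
  rw [← filter_mem_eq_inter, filter_image, card_image_of_injective _ hf]

theorem Finset.card_inter_image_le_card_inter_image {U W W' : Type*} [DecidableEq W]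
    [DecidableEq W'] {f : U → W} {f' : U → W'} (hf : Function.Injective f)
    (hf' : Function.Injective f') {A : Finset W} {A' : Finset W'} (h : ∀ u, f u ∈ A → f' u ∈ A')
    (S : Finset U) :
    (A ∩ S.image f).card ≤ (A' ∩ S.image f').card := by
  rw [inter_comm, card_image_inter hf, inter_comm, card_image_inter hf']
  exact card_le_card (monotone_filter_right S fun u _ => h u)

section Boundaried

variable {Λ U : Type*} [Fintype Λ] [Fintype U] [DecidableEq U]

def BGraph.labelsIn (H : BGraph Λ U) (A : Finset U) : Finset Λ :=
  univ.filter fun l => ∀ u, H.bd l = some u → u ∈ A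

theorem BGraph.labelsIn_union [DecidableEq Λ] {H : BGraph Λ U} {A B : Finset U}
    (h : IsSep H.G A B) :
    H.labelsIn A ∪ H.labelsIn B = univ := by
  refine eq_univ_of_forall fun l => ?_
  simp only [BGraph.labelsIn, mem_union, mem_filter, mem_univ, true_and]
  cases hl : H.bd l with
  | none => simp
  | some u => simpa using h.mem_or_mem_s17 u

theorem BGraph.weakSigLE_labelsIn {H : BGraph Λ U} {A B : Finset U} (h : IsSep H.G A B) :
    WeakSigLE H (H.labelsIn A) (H.labelsIn B) (A ∩ B).card :=
  ⟨A, B, h, fun _ hl => (mem_filter.mp hl).2, fun _ hl => (mem_filter.mp hl).2, le_rfl⟩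

end Boundaried

section Signature

variable {Λ U₁ U₂ : Type*} [Fintype Λ] [DecidableEq Λ] [Fintype U₁] [DecidableEq U₁]
  [Fintype U₂] [DecidableEq U₂] {H₁ : BGraph Λ U₁} {H₂ : BGraph Λ U₂}

theorem SameWeakSig.symm (h : SameWeakSig H₁ H₂) : SameWeakSig H₂ H₁ :=
  fun A' B' hcov n => (h A' B' hcov n).symm

/-- A label present in `H₂` but not in `H₁` would cost a separator vertex in `H₂` but none
in `H₁` at `({l}, Λ)`. -/
theorem SameWeakSig.exists_bd_of_bd (h : SameWeakSig H₁ H₂) {l : Λ} {u : U₂}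
    (hu : H₂.bd l = some u) : ∃ b, H₁.bd l = some b := by
  by_contra! hnone
  have h₁ : WeakSigLE H₁ {l} univ 0 :=
    ⟨∅, univ, ⟨by simp, by simp⟩, fun l' hl' v hv => by simp_all, by simp, by simp⟩
  obtain ⟨A, B, -, hA, hB, hcard⟩ := (h {l} univ (by simp) 0).mp h₁
  have hu_mem : u ∈ A ∩ B :=
    mem_inter.mpr ⟨hA l (mem_singleton_self l) u hu, hB l (mem_univ l) u hu⟩
  exact (card_pos.mpr ⟨u, hu_mem⟩).ne' (Nat.le_zero.mp hcard)

end Signature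

section Gluing

variable {Λ U U' W : Type*} {H : BGraph Λ U} {H' : BGraph Λ U'} {K : SimpleGraph W}
  {f : U → W} {g : U' → W}

def IsGluing.homLeft (hK : IsGluing H H' K f g) : H.G →g K where
  toFun := f
  map_rel' hab := (hK.2.2.2.2 _ _).mpr (Or.inl ⟨_, _, rfl, rfl, hab⟩)

def IsGluing.homRight (hK : IsGluing H H' K f g) : H'.G →g K where
  toFun := g
  map_rel' hab := (hK.2.2.2.2 _ _).mpr (Or.inr ⟨_, _, rfl, rfl, hab⟩)

theorem IsGluing.isSep_glue [Fintype U] [DecidableEq U] [Fintype U'] [DecidableEq U']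
    [Fintype W] [DecidableEq W] (hK : IsGluing H H' K f g) {A B : Finset U} {A' B' : Finset U'}
    (h : IsSep H.G A B) (h' : IsSep H'.G A' B') :
    IsSep K (A.image f ∪ A'.image g) (B.image f ∪ B'.image g) := by
  obtain ⟨-, -, hcov, -, hadj⟩ := hK
  refine ⟨eq_univ_of_forall fun w => ?_, fun x hxA hxB y hyB hyA hxy => ?_⟩
  · rcases hcov w with ⟨a, rfl⟩ | ⟨b, rfl⟩
    · exact mem_union.mpr ((h.mem_or_mem_s17 a).imp (mem_union_left _ <| mem_image_of_mem f ·)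
        (mem_union_left _ <| mem_image_of_mem f ·))
    · exact mem_union.mpr ((h'.mem_or_mem_s17 b).imp (mem_union_right _ <| mem_image_of_mem g ·)
        (mem_union_right _ <| mem_image_of_mem g ·))
  · rcases (hadj x y).mp hxy with ⟨a, a', rfl, rfl, haa'⟩ | ⟨b, b', rfl, rfl, hbb'⟩
    · have haB : a ∉ B := fun ha => hxB (mem_union_left _ (mem_image_of_mem f ha))
      have ha'A : a' ∉ A := fun ha => hyA (mem_union_left _ (mem_image_of_mem f ha))
      exact h.2 a ((h.mem_or_mem_s17 a).resolve_right haB) haB a'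
        ((h.mem_or_mem_s17 a').resolve_left ha'A) ha'A haa'
    · have hbB : b ∉ B' := fun hb => hxB (mem_union_right _ (mem_image_of_mem g hb))
      have hb'A : b' ∉ A' := fun hb => hyA (mem_union_right _ (mem_image_of_mem g hb))
      exact h'.2 b ((h'.mem_or_mem_s17 b).resolve_right hbB) hbB b'
        ((h'.mem_or_mem_s17 b').resolve_left hb'A) hb'A hbb'

theorem IsGluing.inter_glue_subset [DecidableEq U] [DecidableEq U'] [DecidableEq W]
    (hK : IsGluing H H' K f g) {A B : Finset U} {A' B' : Finset U'}
    (hA : ∀ a b, f a = g b → a ∈ A → b ∈ A') (hB : ∀ a b, f a = g b → a ∈ B → b ∈ B') :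
    (A.image f ∪ A'.image g) ∩ (B.image f ∪ B'.image g) ⊆
      (A ∩ B).image f ∪ (A' ∩ B').image g := by
  obtain ⟨hf, hg, -, -, -⟩ := hK
  simp only [subset_iff, mem_inter, mem_union, mem_image]
  rintro w ⟨⟨a, ha, rfl⟩ | ⟨b, hb, rfl⟩, ⟨a', ha', e⟩ | ⟨b', hb', e⟩⟩
  · exact Or.inl ⟨a, ⟨ha, hf e ▸ ha'⟩, rfl⟩
  · exact Or.inr ⟨b', ⟨hA a b' e.symm ha, hb'⟩, e⟩
  · exact Or.inr ⟨b, ⟨hb, hB a' b e ha'⟩, rfl⟩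
  · exact Or.inr ⟨b, ⟨hb, hg e ▸ hb'⟩, rfl⟩

theorem IsGluing.card_image_union_image [DecidableEq W] (hK : IsGluing H H' K f g)
    (D : Finset U) (D' : Finset U') :
    (D.image f ∪ D'.image g).card + (D.filter (f · ∈ D'.image g)).card = D.card + D'.card := by
  rw [← card_image_inter hK.1, card_union_add_card_inter, card_image_of_injective _ hK.1,
    card_image_of_injective _ hK.2.1]

theorem IsGluing.card_inter_glue_add_le [DecidableEq U] [DecidableEq U'] [DecidableEq W]
    (hK : IsGluing H H' K f g) {A B : Finset U} {A' B' : Finset U'}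
    (hA : ∀ a b, f a = g b → a ∈ A → b ∈ A') (hB : ∀ a b, f a = g b → a ∈ B → b ∈ B') :
    ((A.image f ∪ A'.image g) ∩ (B.image f ∪ B'.image g)).card +
        ((A ∩ B).filter (f · ∈ (A' ∩ B').image g)).card ≤ (A ∩ B).card + (A' ∩ B').card := by
  have := card_le_card (hK.inter_glue_subset hA hB)
  have := hK.card_image_union_image (A ∩ B) (A' ∩ B')
  omega

theorem IsGluing.card_add_card_le [DecidableEq W] (hK : IsGluing H H' K f g) {D : Finset U}
    {D' : Finset U'} {X : Finset W} (hD : ∀ a ∈ D, f a ∈ X) (hD' : ∀ b ∈ D', g b ∈ X) :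
    D.card + D'.card ≤ X.card + (D.filter (f · ∈ D'.image g)).card := by
  have := card_le_card (union_subset (image_subset_iff.mpr hD) (image_subset_iff.mpr hD'))
  have := hK.card_image_union_image D D'
  omega

theorem IsGluing.mem_labelsIn_comap [Fintype Λ] [Fintype U'] [DecidableEq U'] [DecidableEq W]
    (hK : IsGluing H H' K f g) {A : Finset W} {l : Λ} {a : U}
    (hl : H.bd l = some a) (ha : f a ∈ A) :
    l ∈ H'.labelsIn (univ.filter (g · ∈ A)) := by
  refine mem_filter.mpr ⟨mem_univ l, fun u hu => ?_⟩
  rw [mem_filter, ← (hK.2.2.2.1 a u).mpr ⟨l, hl, hu⟩]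
  exact ⟨mem_univ u, ha⟩

end Gluing

theorem UnbreakableSet.of_sameWeakSig {Λ : Type*} [Fintype Λ] [DecidableEq Λ]
    {V₀ V₁ V₂ W₁ W₂ : Type*} [Fintype V₀] [DecidableEq V₀] [Fintype V₁] [DecidableEq V₁]
    [Fintype V₂] [DecidableEq V₂] [Fintype W₁] [DecidableEq W₁] [Fintype W₂] [DecidableEq W₂]
    {H : BGraph Λ V₀} {H₁ : BGraph Λ V₁} {H₂ : BGraph Λ V₂} {K₁ : SimpleGraph W₁}
    {K₂ : SimpleGraph W₂} {f₁ : V₀ → W₁} {g₁ : V₁ → W₁} {f₂ : V₀ → W₂} {g₂ : V₂ → W₂}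
    {S : Finset V₀} {q r : ℕ} (hU : UnbreakableSet K₁ (S.image f₁) q r)
    (hsig : SameWeakSig H₁ H₂) (hK₁ : IsGluing H H₁ K₁ f₁ g₁) (hK₂ : IsGluing H H₂ K₂ f₂ g₂) :
    UnbreakableSet K₂ (S.image f₂) q r := by
  intro A₂ B₂ hsep₂ hord₂
  set A₀ := univ.filter (f₂ · ∈ A₂)
  set B₀ := univ.filter (f₂ · ∈ B₂)
  set A₂' := univ.filter (g₂ · ∈ A₂)
  set B₂' := univ.filter (g₂ · ∈ B₂)
  have hsep₀ : IsSep H.G A₀ B₀ := hsep₂.comap hK₂.homLeft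
  have hsep₂' : IsSep H₂.G A₂' B₂' := hsep₂.comap hK₂.homRight
  obtain ⟨A₁', B₁', hsep₁', hA₁', hB₁', hord₁'⟩ :=
    (hsig _ _ (BGraph.labelsIn_union hsep₂') _).mpr (BGraph.weakSigLE_labelsIn hsep₂')
  have hA : ∀ a b, f₁ a = g₁ b → a ∈ A₀ → b ∈ A₁' := fun a b hab ha => by
    obtain ⟨l, hla, hlb⟩ := (hK₁.2.2.2.1 a b).mp hab
    exact hA₁' l (hK₂.mem_labelsIn_comap hla (mem_filter.mp ha).2) b hlb
  have hB : ∀ a b, f₁ a = g₁ b → a ∈ B₀ → b ∈ B₁' := fun a b hab hb => by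
    obtain ⟨l, hla, hlb⟩ := (hK₁.2.2.2.1 a b).mp hab
    exact hB₁' l (hK₂.mem_labelsIn_comap hla (mem_filter.mp hb).2) b hlb
  have hshared : (A₀ ∩ B₀).filter (f₂ · ∈ (A₂' ∩ B₂').image g₂) ⊆
      (A₀ ∩ B₀).filter (f₁ · ∈ (A₁' ∩ B₁').image g₁) := by
    refine monotone_filter_right _ fun a ha hv => ?_
    obtain ⟨v, -, hv⟩ := mem_image.mp hv
    obtain ⟨l, hla, hlv⟩ := (hK₂.2.2.2.1 a v).mp hv.symm
    obtain ⟨b, hlb⟩ := hsig.exists_bd_of_bd hlv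
    have hab : f₁ a = g₁ b := (hK₁.2.2.2.1 a b).mpr ⟨l, hla, hlb⟩
    obtain ⟨haA, haB⟩ := mem_inter.mp ha
    exact mem_image.mpr ⟨b, mem_inter.mpr ⟨hA a b hab haA, hB a b hab haB⟩, hab.symm⟩
  have hord₁ : ((A₀.image f₁ ∪ A₁'.image g₁) ∩ (B₀.image f₁ ∪ B₁'.image g₁)).card ≤ r := by
    have := hK₁.card_inter_glue_add_le hA hB
    have := hK₂.card_add_card_le (D := A₀ ∩ B₀) (D' := A₂' ∩ B₂') (X := A₂ ∩ B₂)
      (by simp [A₀, B₀]) (by simp [A₂', B₂'])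
    have := card_le_card hshared
    omega
  rcases hU _ _ (hK₁.isSep_glue hsep₀ hsep₁') hord₁ with h | h
  · refine Or.inl ((card_inter_image_le_card_inter_image hK₂.1 hK₁.1 (fun u hu => ?_) S).trans h)
    exact mem_union_left _ (mem_image_of_mem f₁ (mem_filter.mpr ⟨mem_univ u, hu⟩))
  · refine Or.inr ((card_inter_image_le_card_inter_image hK₂.1 hK₁.1 (fun u hu => ?_) S).trans h)
    exact mem_union_left _ (mem_image_of_mem f₁ (mem_filter.mpr ⟨mem_univ u, hu⟩))

/-- if `(G₁,ι₁)` and `(G₂,ι₂)` have the same weak cut signature, then for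
every `S ⊆ V(G)` and `q, r`, the set `S` is `(q,r)`-unbreakable in `(G,ι) ⊕ (G₁,ι₁)` iff
it is `(q,r)`-unbreakable in `(G,ι) ⊕ (G₂,ι₂)`. -/
theorem same_weak_sig_same_unbreakable {Λ : Type*} [Fintype Λ] [DecidableEq Λ]
    {V₀ V₁ V₂ W₁ W₂ : Type*} [Fintype V₀] [DecidableEq V₀] [Fintype V₁] [DecidableEq V₁]
    [Fintype V₂] [DecidableEq V₂] [Fintype W₁] [DecidableEq W₁]
    [Fintype W₂] [DecidableEq W₂]
    (H : BGraph Λ V₀) (H₁ : BGraph Λ V₁) (H₂ : BGraph Λ V₂)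
    (hsig : SameWeakSig H₁ H₂)
    (K₁ : SimpleGraph W₁) (f₁ : V₀ → W₁) (g₁ : V₁ → W₁) (hK₁ : IsGluing H H₁ K₁ f₁ g₁)
    (K₂ : SimpleGraph W₂) (f₂ : V₀ → W₂) (g₂ : V₂ → W₂) (hK₂ : IsGluing H H₂ K₂ f₂ g₂)
    (S : Finset V₀) (q r : ℕ) :
    UnbreakableSet K₁ (S.image f₁) q r ↔ UnbreakableSet K₂ (S.image f₂) q r :=
  ⟨fun h => h.of_sameWeakSig hsig hK₁ hK₂, fun h => h.of_sameWeakSig hsig.symm hK₂ hK₁⟩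
end
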